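/- arXiv:2305.09987 — 4 statements merged into one kernel-verified Lean document; each statement's English description precedes it below -/
import Mathlib

section
/- Let S₁ and S₂ be finite nonempty sets of points in the Euclidean plane that are strictly separated by a vertical line. Then there exists a line that is simultaneously a supporting line of the convex hull of S₁ and of the convex hull of S₂, touching each hull from above (i.e., every point of S₁ ∪ S₂ lies on or below this line, and it contains at least one point of S₁ and at least one point of S₂). -/
/-- `p` lies weakly below the line `y = α x + β`. -/
def BelowLine (α β : ℝ) (p : ℝ × ℝ) : Prop := p.2 ≤ α * p.1 + β

/-- `p` lies on the line `y = α x + β`. -/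
def OnLine (α β : ℝ) (p : ℝ × ℝ) : Prop := p.2 = α * p.1 + β

/-- The upper bridge between two finite nonempty point sets strictly separated by a
vertical line: a common supporting-from-above line touching both sets. -/
theorem upper_bridge_exists (S₁ S₂ : Finset (ℝ × ℝ)) (h₁ : S₁.Nonempty) (h₂ : S₂.Nonempty)
    (c : ℝ) (hsep₁ : ∀ p ∈ S₁, p.1 < c) (hsep₂ : ∀ p ∈ S₂, c < p.1) :
    ∃ α β : ℝ, (∀ p ∈ (S₁ : Set (ℝ × ℝ)) ∪ (S₂ : Set (ℝ × ℝ)), BelowLine α β p) ∧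
      (∃ a ∈ S₁, OnLine α β a) ∧ (∃ b ∈ S₂, OnLine α β b) := by
  classical
  set g₁ : ℝ → ℝ := fun α => S₁.sup' h₁ (fun p => p.2 - α * p.1) with hg₁
  set g₂ : ℝ → ℝ := fun α => S₂.sup' h₂ (fun p => p.2 - α * p.1) with hg₂
  have hc₁ : Continuous g₁ := by
    apply continuous_iff_continuousAt.2
    intro x
    exact ContinuousAt.finset_sup'_apply h₁ fun p _ =>
      (continuousAt_const.sub (continuousAt_id.mul continuousAt_const))
  have hc₂ : Continuous g₂ := by
    apply continuous_iff_continuousAt.2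
    intro x
    exact ContinuousAt.finset_sup'_apply h₂ fun p _ =>
      (continuousAt_const.sub (continuousAt_id.mul continuousAt_const))
  have hf : Continuous (fun α => g₁ α - g₂ α) := hc₁.sub hc₂
  obtain ⟨b₀, hb₀⟩ := id h₂
  obtain ⟨a₀, ha₀⟩ := id h₁
  -- low slope: g₁ < g₂
  set M₁ : ℝ := S₁.inf' h₁ (fun p => (b₀.2 - p.2) / (b₀.1 - p.1)) - 1 with hM₁
  set M₂ : ℝ := S₂.sup' h₂ (fun q => (q.2 - a₀.2) / (q.1 - a₀.1)) + 1 with hM₂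
  have hlow : g₁ M₁ - g₂ M₁ < 0 := by
    obtain ⟨p₀, hp₀, hp₀eq⟩ := Finset.exists_mem_eq_sup' h₁ (fun p => p.2 - M₁ * p.1)
    have hd : (0:ℝ) < b₀.1 - p₀.1 := by
      have := hsep₁ p₀ hp₀; have := hsep₂ b₀ hb₀; linarith
    have hMle : M₁ ≤ (b₀.2 - p₀.2) / (b₀.1 - p₀.1) - 1 := by
      have := Finset.inf'_le (f := fun p => (b₀.2 - p.2) / (b₀.1 - p.1)) hp₀
      simp only [hM₁]; linarith
    have hkey : M₁ * (b₀.1 - p₀.1) < b₀.2 - p₀.2 := by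
      have h2 : M₁ * (b₀.1 - p₀.1) ≤ ((b₀.2 - p₀.2) / (b₀.1 - p₀.1) - 1) * (b₀.1 - p₀.1) :=
        mul_le_mul_of_nonneg_right hMle (le_of_lt hd)
      have h3 : ((b₀.2 - p₀.2) / (b₀.1 - p₀.1)) * (b₀.1 - p₀.1) = b₀.2 - p₀.2 :=
        div_mul_cancel₀ _ (ne_of_gt hd)
      have h4 : ((b₀.2 - p₀.2) / (b₀.1 - p₀.1) - 1) * (b₀.1 - p₀.1)
          = b₀.2 - p₀.2 - (b₀.1 - p₀.1) := by rw [sub_mul, h3, one_mul]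
      rw [h4] at h2
      linarith
    have hg₂ge : b₀.2 - M₁ * b₀.1 ≤ g₂ M₁ :=
      Finset.le_sup' (f := fun p => p.2 - M₁ * p.1) hb₀
    have : g₁ M₁ = p₀.2 - M₁ * p₀.1 := hp₀eq
    nlinarith
  have hhigh : 0 < g₁ M₂ - g₂ M₂ := by
    obtain ⟨q₀, hq₀, hq₀eq⟩ := Finset.exists_mem_eq_sup' h₂ (fun p => p.2 - M₂ * p.1)
    have hd : (0:ℝ) < q₀.1 - a₀.1 := by
      have := hsep₁ a₀ ha₀; have := hsep₂ q₀ hq₀; linarith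
    have hMge : (q₀.2 - a₀.2) / (q₀.1 - a₀.1) + 1 ≤ M₂ := by
      have := Finset.le_sup' (f := fun q => (q.2 - a₀.2) / (q.1 - a₀.1)) hq₀
      simp only [hM₂]; linarith
    have hkey : q₀.2 - a₀.2 < M₂ * (q₀.1 - a₀.1) := by
      have h2 : ((q₀.2 - a₀.2) / (q₀.1 - a₀.1) + 1) * (q₀.1 - a₀.1) ≤ M₂ * (q₀.1 - a₀.1) :=
        mul_le_mul_of_nonneg_right hMge (le_of_lt hd)
      have h3 : ((q₀.2 - a₀.2) / (q₀.1 - a₀.1)) * (q₀.1 - a₀.1) = q₀.2 - a₀.2 :=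
        div_mul_cancel₀ _ (ne_of_gt hd)
      have h4 : ((q₀.2 - a₀.2) / (q₀.1 - a₀.1) + 1) * (q₀.1 - a₀.1)
          = q₀.2 - a₀.2 + (q₀.1 - a₀.1) := by rw [add_mul, h3, one_mul]
      rw [h4] at h2
      linarith
    have hg₁ge : a₀.2 - M₂ * a₀.1 ≤ g₁ M₂ :=
      Finset.le_sup' (f := fun p => p.2 - M₂ * p.1) ha₀
    have : g₂ M₂ = q₀.2 - M₂ * q₀.1 := hq₀eq
    nlinarith
  -- IVT
  have : ∃ α, g₁ α - g₂ α = 0 := by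
    rcases le_total M₁ M₂ with h | h
    · have := intermediate_value_Icc h (hf.continuousOn)
      have h0 : (0:ℝ) ∈ Set.Icc (g₁ M₁ - g₂ M₁) (g₁ M₂ - g₂ M₂) :=
        ⟨le_of_lt hlow, le_of_lt hhigh⟩
      obtain ⟨α, _, hα⟩ := this h0
      exact ⟨α, hα⟩
    · have := intermediate_value_Icc' h (hf.continuousOn)
      have h0 : (0:ℝ) ∈ Set.Icc (g₁ M₁ - g₂ M₁) (g₁ M₂ - g₂ M₂) :=
        ⟨le_of_lt hlow, le_of_lt hhigh⟩
      obtain ⟨α, _, hα⟩ := this h0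
      exact ⟨α, hα⟩
  obtain ⟨α, hα⟩ := this
  have heq : g₁ α = g₂ α := by linarith
  refine ⟨α, g₁ α, ?_, ?_, ?_⟩
  · rintro p (hp | hp)
    · have : p.2 - α * p.1 ≤ g₁ α := Finset.le_sup' (f := fun p => p.2 - α * p.1) hp
      unfold BelowLine; linarith
    · have : p.2 - α * p.1 ≤ g₂ α := Finset.le_sup' (f := fun p => p.2 - α * p.1) hp
      unfold BelowLine; linarith
  · obtain ⟨a, ha, haeq⟩ := Finset.exists_mem_eq_sup' h₁ (fun p => p.2 - α * p.1)
    refine ⟨a, ha, ?_⟩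
    unfold OnLine
    have : g₁ α = a.2 - α * a.1 := haeq
    linarith
  · obtain ⟨b, hb, hbeq⟩ := Finset.exists_mem_eq_sup' h₂ (fun p => p.2 - α * p.1)
    refine ⟨b, hb, ?_⟩
    unfold OnLine
    have : g₂ α = b.2 - α * b.1 := hbeq
    linarith
end

section
/- Let A and B be finite planar point sets separated by a vertical line, and suppose [a,b] and [a',b'] (a,a' ∈ A, b,b' ∈ B) are both bridges between the upper hulls of A and B, i.e., all of A ∪ B lies weakly below both lines through the respective pairs. If conv(A ∪ B) is full-dimensional and the points a, b, a', b' are extreme points of conv(A ∪ B), then the two lines through (a,b) and (a',b') coincide; in particular, if no three points of A ∪ B are collinear, the bridge is unique: a = a' and b = b'. -/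
/-- `v` is an extreme point (vertex) of the convex hull of `S`. -/
def IsHullVertex (S : Set (ℝ × ℝ)) (v : ℝ × ℝ) : Prop :=
  v ∈ S ∧ v ∉ convexHull ℝ (S \ {v})

lemma collinear_of_onLine (α β : ℝ) (p q r : ℝ × ℝ)
    (hp : OnLine α β p) (hq : OnLine α β q) (hr : OnLine α β r) :
    Collinear ℝ ({p, q, r} : Set (ℝ × ℝ)) := by
  rw [collinear_iff_of_mem (Set.mem_insert p _)]
  refine ⟨(1, α), ?_⟩
  intro z hz
  have hz' : OnLine α β z := by
    rcases hz with h | h | h <;> subst h <;> assumption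
  refine ⟨z.1 - p.1, ?_⟩
  have : z = ((z.1 - p.1) • ((1 : ℝ), α)) + p := by
    apply Prod.ext
    · simp [Prod.smul_def]
    · simp only [Prod.snd_add, Prod.smul_snd, smul_eq_mul]
      rw [hz', hp]; ring
  simpa using this

/-- Uniqueness of the upper bridge: if two bridges exist between vertically separated
sets `A` and `B` with all endpoints extreme points of `conv (A ∪ B)`, which is
full-dimensional, then the two supporting lines coincide; and if no three points of
`A ∪ B` are collinear, the bridge is unique. -/
theorem bridge_unique (A B : Finset (ℝ × ℝ)) (c : ℝ)
    (hA : ∀ p ∈ A, p.1 < c) (hB : ∀ p ∈ B, c < p.1)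
    (a b a' b' : ℝ × ℝ) (ha : a ∈ A) (hb : b ∈ B) (ha' : a' ∈ A) (hb' : b' ∈ B)
    (α β α' β' : ℝ)
    (h1 : OnLine α β a ∧ OnLine α β b ∧
      ∀ p ∈ (A : Set (ℝ × ℝ)) ∪ (B : Set (ℝ × ℝ)), BelowLine α β p)
    (h2 : OnLine α' β' a' ∧ OnLine α' β' b' ∧
      ∀ p ∈ (A : Set (ℝ × ℝ)) ∪ (B : Set (ℝ × ℝ)), BelowLine α' β' p)
    (hfull : affineSpan ℝ ((A : Set (ℝ × ℝ)) ∪ (B : Set (ℝ × ℝ))) = ⊤)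
    (hea : IsHullVertex ((A : Set (ℝ × ℝ)) ∪ (B : Set (ℝ × ℝ))) a)
    (heb : IsHullVertex ((A : Set (ℝ × ℝ)) ∪ (B : Set (ℝ × ℝ))) b)
    (hea' : IsHullVertex ((A : Set (ℝ × ℝ)) ∪ (B : Set (ℝ × ℝ))) a')
    (heb' : IsHullVertex ((A : Set (ℝ × ℝ)) ∪ (B : Set (ℝ × ℝ))) b') :
    (α = α' ∧ β = β') ∧
    ((∀ p q r : ℝ × ℝ, p ∈ (A : Set (ℝ × ℝ)) ∪ (B : Set (ℝ × ℝ)) →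
        q ∈ (A : Set (ℝ × ℝ)) ∪ (B : Set (ℝ × ℝ)) →
        r ∈ (A : Set (ℝ × ℝ)) ∪ (B : Set (ℝ × ℝ)) →
        p ≠ q → q ≠ r → p ≠ r → ¬ Collinear ℝ ({p, q, r} : Set (ℝ × ℝ))) →
      a = a' ∧ b = b') := by
  obtain ⟨h1a, h1b, hbel1⟩ := h1
  obtain ⟨h2a, h2b, hbel2⟩ := h2
  have haU : a ∈ (A : Set (ℝ × ℝ)) ∪ (B : Set (ℝ × ℝ)) := Or.inl (by exact_mod_cast ha)
  have hbU : b ∈ (A : Set (ℝ × ℝ)) ∪ (B : Set (ℝ × ℝ)) := Or.inr (by exact_mod_cast hb)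
  have haU' : a' ∈ (A : Set (ℝ × ℝ)) ∪ (B : Set (ℝ × ℝ)) := Or.inl (by exact_mod_cast ha')
  have hbU' : b' ∈ (A : Set (ℝ × ℝ)) ∪ (B : Set (ℝ × ℝ)) := Or.inr (by exact_mod_cast hb')
  have ga : a.2 ≤ α' * a.1 + β' := hbel2 a haU
  have gb : b.2 ≤ α' * b.1 + β' := hbel2 b hbU
  have fa' : a'.2 ≤ α * a'.1 + β := hbel1 a' haU'
  have fb' : b'.2 ≤ α * b'.1 + β := hbel1 b' hbU'
  rw [OnLine] at h1a h1b h2a h2b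
  have hxa : a.1 < c := hA a ha
  have hxb : c < b.1 := hB b hb
  have hxa' : a'.1 < c := hA a' ha'
  have hxb' : c < b'.1 := hB b' hb'
  -- slope comparison
  have hle : α ≤ α' := by nlinarith [gb, fa']
  have hge : α' ≤ α := by nlinarith [ga, fb']
  have hαα : α = α' := le_antisymm hle hge
  have hββ : β = β' := by
    subst hαα
    have hβle : β ≤ β' := by nlinarith [gb]
    have hβge : β' ≤ β := by nlinarith [fa']
    linarith
  refine ⟨⟨hαα, hββ⟩, ?_⟩
  intro hcol
  subst hαα; subst hββ
  have hab : a ≠ b := fun h => by rw [h] at hxa; linarith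
  have hab' : a ≠ b' := fun h => by rw [h] at hxa; linarith
  have ha'b : a' ≠ b := fun h => by rw [h] at hxa'; linarith
  have ha'b' : a' ≠ b' := fun h => by rw [h] at hxa'; linarith
  constructor
  · by_contra hne
    exact hcol a a' b haU haU' hbU hne ha'b hab
      (collinear_of_onLine α β a a' b h1a h2a h1b)
  · by_contra hne
    exact hcol a b b' haU hbU hbU' hab hne hab'
      (collinear_of_onLine α β a b b' h1a h1b h2b)
end

section
/- Let S be a finite set of points in the plane with distinct x-coordinates, let p_min and p_max be the points of S with minimum and maximum x-coordinate, respectively. Then every vertex of the convex hull of S lies on or above the segment [p_min, p_max] or on or below it, the vertices weakly above form the upper hull (a convex chain from p_min to p_max along which every point of S lies weakly below each edge's supporting line), the vertices weakly below form the lower hull, and the two chains intersect exactly in {p_min, p_max} (assuming no point of S other than p_min, p_max lies on the segment [p_min, p_max]). -/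
/-- `p` lies weakly above the line `y = α x + β`. -/
def AboveLine (α β : ℝ) (p : ℝ × ℝ) : Prop := α * p.1 + β ≤ p.2

/-- `v` is a vertex of the upper hull of `S`. -/
def IsUpperVertex (S : Set (ℝ × ℝ)) (v : ℝ × ℝ) : Prop :=
  IsHullVertex S v ∧ ∃ α β : ℝ, OnLine α β v ∧ ∀ p ∈ S, BelowLine α β p

/-- `v` is a vertex of the lower hull of `S`. -/
def IsLowerVertex (S : Set (ℝ × ℝ)) (v : ℝ × ℝ) : Prop :=
  IsHullVertex S v ∧ ∃ α β : ℝ, OnLine α β v ∧ ∀ p ∈ S, AboveLine α β p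

/-!
A hull vertex `v` other than `p_min`, `p_max` is strictly separated from `conv (S \ {v})` by a
linear functional `a x + b y`. The point of the chord `[p_min, p_max]` vertically over or under
`v` lies in that hull, so `b` has the sign opposite to the height of `v` above the chord, and
the level line of the functional through `v` is a non-vertical supporting line, with `S` below
it when `v` is above the chord and above it when `v` is below. Conversely, a supporting line
with `S` below it passes above both endpoints, hence above the whole chord, so its point `v` is
above the chord. The endpoints are strictly extreme in `x`, so sufficiently steep lines support
`S` there from both sides. A vertex both above and below lies on the chord and is an endpoint
by hypothesis.
-/

open Set

lemma Set.Finite.exists_forall_mul_add_le {X : Type*} {S : Set X} (hS : S.Finite)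
    {f : X → ℝ} (g : X → ℝ) {v : X} (h : ∀ p ∈ S, p ≠ v → f v < f p) :
    ∃ k : ℝ, ∀ p ∈ S, k * f v + g v ≤ k * f p + g p := by
  obtain ⟨k, hk⟩ := (hS.image fun p => (g v - g p) / (f p - f v)).bddAbove
  refine ⟨k, fun p hp => ?_⟩
  rcases eq_or_ne p v with rfl | hne
  · exact le_rfl
  · linear_combination (div_le_iff₀ (sub_pos.2 (h p hp hne))).1 (hk ⟨p, hp, rfl⟩)

lemma convex_setOf_belowLine (α β : ℝ) : Convex ℝ {p | BelowLine α β p} := by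
  intro x hx y hy a b ha hb hab
  simp only [mem_ofPred_eq, BelowLine, Prod.fst_add, Prod.snd_add, Prod.smul_fst,
    Prod.smul_snd, smul_eq_mul] at *
  linear_combination a * hx + b * hy + β * hab

lemma convex_setOf_aboveLine (α β : ℝ) : Convex ℝ {p | AboveLine α β p} := by
  intro x hx y hy a b ha hb hab
  simp only [mem_ofPred_eq, AboveLine, Prod.fst_add, Prod.snd_add, Prod.smul_fst,
    Prod.smul_snd, smul_eq_mul] at *
  linear_combination a * hx + b * hy - β * hab

lemma mem_segment_of_onLine {α β : ℝ} {p q z : ℝ × ℝ} (hp : OnLine α β p) (hq : OnLine α β q)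
    (hz : OnLine α β z) (hpz : p.1 ≤ z.1) (hzq : z.1 ≤ q.1) : z ∈ segment ℝ p q := by
  let graph : ℝ →ᵃ[ℝ] ℝ × ℝ := AffineMap.lineMap (0, β) (1, α + β)
  have hgraph : ∀ w, OnLine α β w → graph w.1 = w := fun w hw => by
    ext <;> simp [graph, AffineMap.lineMap_apply]
    rw [hw]; ring
  rw [← hgraph p hp, ← hgraph q hq, ← hgraph z hz, ← image_segment]
  exact mem_image_of_mem _ (Icc_subset_segment ⟨hpz, hzq⟩)

lemma aboveLine_of_onLine_of_belowLine {α β a b : ℝ} {p q v : ℝ × ℝ} (hp : OnLine α β p)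
    (hq : OnLine α β q) (hpb : BelowLine a b p) (hqb : BelowLine a b q) (hv : OnLine a b v)
    (hpv : p.1 ≤ v.1) (hvq : v.1 ≤ q.1) : AboveLine α β v :=
  have hz : (v.1, α * v.1 + β) ∈ segment ℝ p q := mem_segment_of_onLine hp hq rfl hpv hvq
  ((convex_setOf_belowLine a b).segment_subset hpb hqb hz).trans_eq hv.symm

lemma belowLine_of_onLine_of_aboveLine {α β a b : ℝ} {p q v : ℝ × ℝ} (hp : OnLine α β p)
    (hq : OnLine α β q) (hpa : AboveLine a b p) (hqa : AboveLine a b q) (hv : OnLine a b v)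
    (hpv : p.1 ≤ v.1) (hvq : v.1 ≤ q.1) : BelowLine α β v :=
  have hz : (v.1, α * v.1 + β) ∈ segment ℝ p q := mem_segment_of_onLine hp hq rfl hpv hvq
  hv.trans_le ((convex_setOf_aboveLine a b).segment_subset hpa hqa hz)

lemma exists_forall_lt_of_isHullVertex {S : Set (ℝ × ℝ)} (hS : S.Finite) {v : ℝ × ℝ}
    (hv : IsHullVertex S v) :
    ∃ a b : ℝ, ∀ z ∈ convexHull ℝ (S \ {v}), a * v.1 + b * v.2 < a * z.1 + b * z.2 := by
  obtain ⟨f, u, hfv, hfz⟩ := geometric_hahn_banach_point_closed (convex_convexHull ℝ _)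
    (hS.sdiff.isCompact_convexHull (𝕜 := ℝ)).isClosed hv.2
  have hf : ∀ z : ℝ × ℝ, f z = f (1, 0) * z.1 + f (0, 1) * z.2 := fun z => by
    have hz : z = z.1 • ((1 : ℝ), (0 : ℝ)) + z.2 • ((0 : ℝ), (1 : ℝ)) := by ext <;> simp
    conv_lhs => rw [hz, map_add, map_smul, map_smul, smul_eq_mul, smul_eq_mul]
    ring
  exact ⟨f (1, 0), f (0, 1), fun z hz => by rw [← hf, ← hf]; exact hfv.trans (hfz z hz)⟩

lemma isHullVertex_of_forall_lt {S : Set (ℝ × ℝ)} {v : ℝ × ℝ} (hv : v ∈ S)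
    (f : ℝ × ℝ →ₗ[ℝ] ℝ) (h : ∀ p ∈ S, p ≠ v → f v < f p) : IsHullVertex S v :=
  ⟨hv, fun hmem => lt_irrefl (f v) <| convexHull_min (t := {p | f v < f p})
    (fun p hp => h p hp.1 hp.2) (convex_halfSpace_gt f.isLinear (f v)) hmem⟩

section Support

variable {S : Set (ℝ × ℝ)} {v : ℝ × ℝ} {a b : ℝ}

lemma exists_belowLine_of_forall_le (hb : b < 0)
    (h : ∀ p ∈ S, a * v.1 + b * v.2 ≤ a * p.1 + b * p.2) :
    ∃ α β : ℝ, OnLine α β v ∧ ∀ p ∈ S, BelowLine α β p := by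
  refine ⟨-a / b, v.2 + a / b * v.1, by unfold OnLine; ring, fun p hp => ?_⟩
  rw [BelowLine, ← sub_nonneg]
  have key : -a / b * p.1 + (v.2 + a / b * v.1) - p.2
      = (a * p.1 + b * p.2 - (a * v.1 + b * v.2)) / -b := by
    field_simp [hb.ne]
    ring
  rw [key]
  exact div_nonneg (sub_nonneg.2 (h p hp)) (neg_nonneg.2 hb.le)

lemma exists_aboveLine_of_forall_le (hb : 0 < b)
    (h : ∀ p ∈ S, a * v.1 + b * v.2 ≤ a * p.1 + b * p.2) :
    ∃ α β : ℝ, OnLine α β v ∧ ∀ p ∈ S, AboveLine α β p := by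
  refine ⟨-a / b, v.2 + a / b * v.1, by unfold OnLine; ring, fun p hp => ?_⟩
  rw [AboveLine, ← sub_nonneg]
  have key : p.2 - (-a / b * p.1 + (v.2 + a / b * v.1))
      = (a * p.1 + b * p.2 - (a * v.1 + b * v.2)) / b := by
    field_simp [hb.ne]
    ring
  rw [key]
  exact div_nonneg (sub_nonneg.2 (h p hp)) hb.le

end Support

lemma isUpperVertex_and_isLowerVertex_of_forall_mul_fst_lt {S : Set (ℝ × ℝ)} (hS : S.Finite)
    {v : ℝ × ℝ} (hv : v ∈ S) (c : ℝ) (h : ∀ p ∈ S, p ≠ v → c * v.1 < c * p.1) :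
    IsUpperVertex S v ∧ IsLowerVertex S v := by
  have hvert : IsHullVertex S v :=
    isHullVertex_of_forall_lt hv (c • LinearMap.fst ℝ ℝ ℝ) (by simpa using h)
  obtain ⟨k, hk⟩ := hS.exists_forall_mul_add_le (f := fun p => c * p.1) (fun p => -p.2) h
  obtain ⟨k', hk'⟩ := hS.exists_forall_mul_add_le (f := fun p => c * p.1) (fun p => p.2) h
  refine ⟨⟨hvert, exists_belowLine_of_forall_le (a := k * c) neg_one_lt_zero fun p hp => ?_⟩,
    ⟨hvert, exists_aboveLine_of_forall_le (a := k' * c) one_pos fun p hp => ?_⟩⟩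
  · linear_combination hk p hp
  · linear_combination hk' p hp

lemma exists_forall_le_and_mul_neg_of_isHullVertex {S : Set (ℝ × ℝ)} (hS : S.Finite)
    {v p q : ℝ × ℝ} {α β : ℝ} (hv : IsHullVertex S v) (hp : p ∈ S) (hq : q ∈ S)
    (hp_ne : p ≠ v) (hq_ne : q ≠ v) (hpl : OnLine α β p) (hql : OnLine α β q)
    (hpv : p.1 ≤ v.1) (hvq : v.1 ≤ q.1) :
    ∃ a b : ℝ, (∀ z ∈ S, a * v.1 + b * v.2 ≤ a * z.1 + b * z.2) ∧
      b * (v.2 - (α * v.1 + β)) < 0 := by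
  obtain ⟨a, b, hsep⟩ := exists_forall_lt_of_isHullVertex hS hv
  have hchord : (v.1, α * v.1 + β) ∈ convexHull ℝ (S \ {v}) :=
    segment_subset_convexHull (mem_sdiff_singleton.2 ⟨hp, hp_ne⟩)
      (mem_sdiff_singleton.2 ⟨hq, hq_ne⟩) (mem_segment_of_onLine hpl hql rfl hpv hvq)
  refine ⟨a, b, fun z hz => ?_, by linear_combination hsep _ hchord⟩
  rcases eq_or_ne z v with rfl | hne
  · exact le_rfl
  · exact (hsep z (subset_convexHull ℝ _ ⟨hz, hne⟩)).le

section Chord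

variable {S : Set (ℝ × ℝ)} {pmin pmax v : ℝ × ℝ} {α β : ℝ}

lemma isUpperVertex_iff (hS : S.Finite) (hpmin : pmin ∈ S) (hpmax : pmax ∈ S)
    (hmin : ∀ p ∈ S, pmin.1 ≤ p.1) (hmax : ∀ p ∈ S, p.1 ≤ pmax.1)
    (hminline : OnLine α β pmin) (hmaxline : OnLine α β pmax)
    (hUmin : IsUpperVertex S pmin) (hUmax : IsUpperVertex S pmax) :
    IsUpperVertex S v ↔ IsHullVertex S v ∧ AboveLine α β v := by
  refine ⟨fun ⟨hv, a, b, hon, hbelow⟩ => ⟨hv, aboveLine_of_onLine_of_belowLine hminline hmaxline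
    (hbelow _ hpmin) (hbelow _ hpmax) hon (hmin v hv.1) (hmax v hv.1)⟩, fun ⟨hv, habove⟩ => ?_⟩
  rcases eq_or_ne v pmin with rfl | hne_min
  · exact hUmin
  rcases eq_or_ne v pmax with rfl | hne_max
  · exact hUmax
  obtain ⟨a, b, hsupp, hneg⟩ := exists_forall_le_and_mul_neg_of_isHullVertex hS hv hpmin hpmax
    hne_min.symm hne_max.symm hminline hmaxline (hmin v hv.1) (hmax v hv.1)
  exact ⟨hv, exists_belowLine_of_forall_le (neg_of_mul_neg_left hneg (sub_nonneg.2 habove)) hsupp⟩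

lemma isLowerVertex_iff (hS : S.Finite) (hpmin : pmin ∈ S) (hpmax : pmax ∈ S)
    (hmin : ∀ p ∈ S, pmin.1 ≤ p.1) (hmax : ∀ p ∈ S, p.1 ≤ pmax.1)
    (hminline : OnLine α β pmin) (hmaxline : OnLine α β pmax)
    (hLmin : IsLowerVertex S pmin) (hLmax : IsLowerVertex S pmax) :
    IsLowerVertex S v ↔ IsHullVertex S v ∧ BelowLine α β v := by
  refine ⟨fun ⟨hv, a, b, hon, habove⟩ => ⟨hv, belowLine_of_onLine_of_aboveLine hminline hmaxline
    (habove _ hpmin) (habove _ hpmax) hon (hmin v hv.1) (hmax v hv.1)⟩, fun ⟨hv, hbelow⟩ => ?_⟩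
  rcases eq_or_ne v pmin with rfl | hne_min
  · exact hLmin
  rcases eq_or_ne v pmax with rfl | hne_max
  · exact hLmax
  obtain ⟨a, b, hsupp, hneg⟩ := exists_forall_le_and_mul_neg_of_isHullVertex hS hv hpmin hpmax
    hne_min.symm hne_max.symm hminline hmaxline (hmin v hv.1) (hmax v hv.1)
  exact ⟨hv, exists_aboveLine_of_forall_le (pos_of_mul_neg_left hneg (sub_nonpos.2 hbelow)) hsupp⟩

end Chord

theorem upper_lower_hull_decomposition_general (S : Finset (ℝ × ℝ))
    (hinj : Set.InjOn Prod.fst (S : Set (ℝ × ℝ)))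
    (pmin pmax : ℝ × ℝ) (hpmin : pmin ∈ S) (hpmax : pmax ∈ S)
    (hmin : ∀ p ∈ S, pmin.1 ≤ p.1) (hmax : ∀ p ∈ S, p.1 ≤ pmax.1)
    (α β : ℝ) (hminline : OnLine α β pmin) (hmaxline : OnLine α β pmax)
    (hnoother : ∀ p ∈ S, p ∈ segment ℝ pmin pmax → p = pmin ∨ p = pmax) :
    (∀ v, IsHullVertex (S : Set (ℝ × ℝ)) v → AboveLine α β v ∨ BelowLine α β v) ∧
    {v | IsHullVertex (S : Set (ℝ × ℝ)) v ∧ AboveLine α β v}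
      = {v | IsUpperVertex (S : Set (ℝ × ℝ)) v} ∧
    {v | IsHullVertex (S : Set (ℝ × ℝ)) v ∧ BelowLine α β v}
      = {v | IsLowerVertex (S : Set (ℝ × ℝ)) v} ∧
    {v | IsUpperVertex (S : Set (ℝ × ℝ)) v} ∩ {v | IsLowerVertex (S : Set (ℝ × ℝ)) v}
      = {pmin, pmax} := by
  have hS := S.finite_toSet
  obtain ⟨hUmin, hLmin⟩ := isUpperVertex_and_isLowerVertex_of_forall_mul_fst_lt hS hpmin 1
    fun p hp hne => by simpa using (hmin p hp).lt_of_ne fun h => hne (hinj hpmin hp h).symm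
  obtain ⟨hUmax, hLmax⟩ := isUpperVertex_and_isLowerVertex_of_forall_mul_fst_lt hS hpmax (-1)
    fun p hp hne => by simpa using (hmax p hp).lt_of_ne fun h => hne (hinj hp hpmax h)
  have hupper v :=
    isUpperVertex_iff (v := v) hS hpmin hpmax hmin hmax hminline hmaxline hUmin hUmax
  have hlower v :=
    isLowerVertex_iff (v := v) hS hpmin hpmax hmin hmax hminline hmaxline hLmin hLmax
  refine ⟨fun v _ => le_total (α * v.1 + β) v.2, Set.ext fun v => (hupper v).symm,
    Set.ext fun v => (hlower v).symm, Set.ext fun v => ?_⟩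
  simp only [mem_inter_iff, mem_ofPred_eq, mem_insert_iff, mem_singleton_iff]
  constructor
  · rintro ⟨hU, hL⟩
    obtain ⟨hv, habove⟩ := (hupper v).1 hU
    exact hnoother v hv.1 (mem_segment_of_onLine hminline hmaxline
      (le_antisymm ((hlower v).1 hL).2 habove) (hmin v hv.1) (hmax v hv.1))
  · rintro (rfl | rfl)
    exacts [⟨hUmin, hLmin⟩, ⟨hUmax, hLmax⟩]

/-- Decomposition of the convex hull into the upper and the lower hull: every hull
vertex lies weakly above or weakly below the segment `[p_min, p_max]`, the vertices
weakly above form the upper hull, those weakly below form the lower hull, and the two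
chains intersect exactly in `{p_min, p_max}`. -/
theorem upper_lower_hull_decomposition (S : Finset (ℝ × ℝ)) (hcard : 2 ≤ S.card)
    (hinj : Set.InjOn Prod.fst (S : Set (ℝ × ℝ)))
    (pmin pmax : ℝ × ℝ) (hpmin : pmin ∈ S) (hpmax : pmax ∈ S)
    (hmin : ∀ p ∈ S, pmin.1 ≤ p.1) (hmax : ∀ p ∈ S, p.1 ≤ pmax.1)
    (α β : ℝ) (hminline : OnLine α β pmin) (hmaxline : OnLine α β pmax)
    (hnoother : ∀ p ∈ S, p ∈ segment ℝ pmin pmax → p = pmin ∨ p = pmax) :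
    (∀ v, IsHullVertex (S : Set (ℝ × ℝ)) v → AboveLine α β v ∨ BelowLine α β v) ∧
    {v | IsHullVertex (S : Set (ℝ × ℝ)) v ∧ AboveLine α β v}
      = {v | IsUpperVertex (S : Set (ℝ × ℝ)) v} ∧
    {v | IsHullVertex (S : Set (ℝ × ℝ)) v ∧ BelowLine α β v}
      = {v | IsLowerVertex (S : Set (ℝ × ℝ)) v} ∧
    {v | IsUpperVertex (S : Set (ℝ × ℝ)) v} ∩ {v | IsLowerVertex (S : Set (ℝ × ℝ)) v}
      = {pmin, pmax} :=
  upper_lower_hull_decomposition_general S hinj pmin pmax hpmin hpmax hmin hmax α β hminline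
    hmaxline hnoother
end

section
/- Let H₁ and H₂ be the upper hulls of two finite planar point sets separated by a vertical line, with m₁ a vertex of H₁ and m₂ a vertex of H₂. If the line ℓ through m₁ and m₂ has all vertices of H₁ weakly below it and all vertices of H₂ weakly below it, then [m₁, m₂] is a bridge between H₁ and H₂, and moreover no vertex of H₁ with x-coordinate greater than m₁.1 and no vertex of H₂ with x-coordinate less than m₂.1 is a vertex of the upper hull of the union, unless it lies on ℓ. -/
/-- In a finite set with distinct x-coordinates there is an upper hull vertex
maximizing `p.2 - α * p.1`. -/
theorem exists_upper_vertex_max (S : Finset (ℝ × ℝ)) (hne : S.Nonempty)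
    (hinj : Set.InjOn Prod.fst (S : Set (ℝ × ℝ))) (α : ℝ) :
    ∃ v ∈ S, IsUpperVertex (S : Set (ℝ × ℝ)) v ∧
      ∀ p ∈ S, p.2 - α * p.1 ≤ v.2 - α * v.1 := by
  classical
  obtain ⟨a, haS, hamax⟩ := S.exists_max_image (fun p => p.2 - α * p.1) hne
  set M := S.filter (fun p => a.2 - α * a.1 ≤ p.2 - α * p.1) with hM
  have hMne : M.Nonempty := ⟨a, by simp [hM, haS]⟩
  obtain ⟨v, hvM, hvmax⟩ := M.exists_max_image Prod.fst hMne
  have hvS : v ∈ S := (Finset.mem_filter.mp hvM).1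
  have hmax : ∀ p ∈ S, p.2 - α * p.1 ≤ v.2 - α * v.1 := by
    intro p hp
    have h1 := hamax p hp
    have h2 := (Finset.mem_filter.mp hvM).2
    simpa using le_trans h1 h2
  have htie : ∀ p ∈ S, v.2 - α * v.1 ≤ p.2 - α * p.1 → p.1 ≤ v.1 := by
    intro p hp hgp
    have hav : a.2 - α * a.1 ≤ v.2 - α * v.1 := by
      simpa using (Finset.mem_filter.mp hvM).2
    have : a.2 - α * a.1 ≤ p.2 - α * p.1 := le_trans hav hgp
    exact hvmax p (Finset.mem_filter.mpr ⟨hp, this⟩)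
  -- choose ε > 0 making v a strict maximizer of p.2 - (α - ε) * p.1
  have hεex : ∃ ε : ℝ, 0 < ε ∧ ∀ p ∈ S, p ≠ v →
      p.2 - (α - ε) * p.1 < v.2 - (α - ε) * v.1 := by
    set T := S.filter (fun p => v.1 < p.1) with hT
    have hTstrict : ∀ p ∈ T, p.2 - α * p.1 < v.2 - α * v.1 := by
      intro p hp
      rcases Finset.mem_filter.mp hp with ⟨hpS, hx⟩
      rcases lt_or_eq_of_le (hmax p hpS) with h | h
      · exact h
      · exact absurd (htie p hpS (le_of_eq h.symm)) (not_le.mpr hx)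
    have key : ∀ ε : ℝ, 0 < ε →
        (∀ p ∈ T, ε * (p.1 - v.1) < (v.2 - α * v.1) - (p.2 - α * p.1)) →
        ∀ p ∈ S, p ≠ v → p.2 - (α - ε) * p.1 < v.2 - (α - ε) * v.1 := by
      intro ε hε hsmall p hpS hpv
      by_cases hx : v.1 < p.1
      · have := hsmall p (Finset.mem_filter.mpr ⟨hpS, hx⟩)
        nlinarith
      · have hxlt : p.1 < v.1 := by
          rcases lt_or_eq_of_le (not_lt.mp hx) with h | h
          · exact h
          · exact absurd (hinj hpS hvS h) hpv
        have := hmax p hpS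
        nlinarith
    rcases T.eq_empty_or_nonempty with hTe | hTne
    · refine ⟨1, one_pos, key 1 one_pos ?_⟩
      intro p hp; rw [hTe] at hp; exact absurd hp (Finset.notMem_empty p)
    · obtain ⟨q, hqT, hqmin⟩ := T.exists_min_image
        (fun p => ((v.2 - α * v.1) - (p.2 - α * p.1)) / (p.1 - v.1)) hTne
      set m := ((v.2 - α * v.1) - (q.2 - α * q.1)) / (q.1 - v.1) with hm
      have hqx : v.1 < q.1 := (Finset.mem_filter.mp hqT).2
      have hmpos : 0 < m := div_pos (by linarith [hTstrict q hqT]) (by linarith)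
      refine ⟨m / 2, by linarith, key (m / 2) (by linarith) ?_⟩
      intro p hp
      have hpx : v.1 < p.1 := (Finset.mem_filter.mp hp).2
      have hle := hqmin p hp
      have hlt : m / 2 < ((v.2 - α * v.1) - (p.2 - α * p.1)) / (p.1 - v.1) := by
        linarith
      calc m / 2 * (p.1 - v.1) < ((v.2 - α * v.1) - (p.2 - α * p.1)) / (p.1 - v.1) * (p.1 - v.1) := by
            exact mul_lt_mul_of_pos_right hlt (by linarith)
        _ = (v.2 - α * v.1) - (p.2 - α * p.1) :=
            div_mul_cancel₀ _ (ne_of_gt (by linarith))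
  obtain ⟨ε, hε, hstrict⟩ := hεex
  set F : ℝ × ℝ → ℝ := fun p => p.2 - (α - ε) * p.1 with hF
  have hFlin : IsLinearMap ℝ F := by
    constructor
    · intro x y; simp [hF, Prod.fst_add, Prod.snd_add]; ring
    · intro c x; simp [hF, Prod.smul_fst, Prod.smul_snd, smul_eq_mul]; ring
  refine ⟨v, hvS, ⟨⟨hvS, ?_⟩, α - ε, v.2 - (α - ε) * v.1, by simp [OnLine], ?_⟩, hmax⟩
  · -- v is a hull vertex
    intro hmem
    have hcoe : ((S : Set (ℝ × ℝ)) \ {v}) = ((S.erase v : Finset (ℝ × ℝ)) : Set (ℝ × ℝ)) := by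
      simp [Finset.coe_erase]
    rw [hcoe] at hmem
    rcases (S.erase v).eq_empty_or_nonempty with hEe | hEne
    · rw [hEe] at hmem; simp at hmem
    · set K := (S.erase v).sup' hEne F with hK
      have hsub : ((S.erase v : Finset (ℝ × ℝ)) : Set (ℝ × ℝ)) ⊆ {p | F p ≤ K} :=
        fun p hp => Finset.le_sup' F hp
      have hconv : Convex ℝ {p : ℝ × ℝ | F p ≤ K} := convex_halfSpace_le hFlin K
      have hvK : F v ≤ K := convexHull_min hsub hconv hmem
      obtain ⟨p₀, hp₀, hKp₀⟩ := Finset.exists_mem_eq_sup' hEne F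
      have hp₀S : p₀ ∈ S := Finset.mem_of_mem_erase hp₀
      have hp₀v : p₀ ≠ v := Finset.ne_of_mem_erase hp₀
      have := hstrict p₀ hp₀S hp₀v
      rw [hK, hKp₀] at hvK
      simp only [hF] at hvK this
      linarith
  · -- supporting line
    intro p hp
    by_cases hpv : p = v
    · subst hpv; simp [BelowLine]
    · have := hstrict p hp hpv
      simp only [BelowLine]
      linarith

/-- Correctness of the termination test of the `Bridge` procedure: if the line `ℓ`
through upper hull vertices `m₁` of `S₁` and `m₂` of `S₂` has all upper hull vertices
of `S₁` and of `S₂` weakly below it, then `[m₁, m₂]` is a bridge (all of `S₁ ∪ S₂` is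
weakly below `ℓ`), and no upper hull vertex of `S₁` to the right of `m₁` nor of `S₂`
to the left of `m₂` is a vertex of the upper hull of `S₁ ∪ S₂`, unless it lies on `ℓ`. -/
theorem bridge_termination_test (S₁ S₂ : Finset (ℝ × ℝ)) (c : ℝ)
    (hinj : Set.InjOn Prod.fst ((S₁ : Set (ℝ × ℝ)) ∪ (S₂ : Set (ℝ × ℝ))))
    (hS₁ : ∀ p ∈ S₁, p.1 < c) (hS₂ : ∀ p ∈ S₂, c < p.1)
    (m₁ m₂ : ℝ × ℝ)
    (hm₁ : IsUpperVertex (S₁ : Set (ℝ × ℝ)) m₁)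
    (hm₂ : IsUpperVertex (S₂ : Set (ℝ × ℝ)) m₂)
    (α β : ℝ) (hl₁ : OnLine α β m₁) (hl₂ : OnLine α β m₂)
    (hbelow₁ : ∀ v, IsUpperVertex (S₁ : Set (ℝ × ℝ)) v → BelowLine α β v)
    (hbelow₂ : ∀ v, IsUpperVertex (S₂ : Set (ℝ × ℝ)) v → BelowLine α β v) :
    (∀ p ∈ (S₁ : Set (ℝ × ℝ)) ∪ (S₂ : Set (ℝ × ℝ)), BelowLine α β p) ∧
    (∀ v, (IsUpperVertex (S₁ : Set (ℝ × ℝ)) v ∧ m₁.1 < v.1) ∨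
          (IsUpperVertex (S₂ : Set (ℝ × ℝ)) v ∧ v.1 < m₂.1) →
      IsUpperVertex ((S₁ : Set (ℝ × ℝ)) ∪ (S₂ : Set (ℝ × ℝ))) v → OnLine α β v) := by
  have hb : ∀ p ∈ (S₁ : Set (ℝ × ℝ)) ∪ (S₂ : Set (ℝ × ℝ)), BelowLine α β p := by
    rintro p (hp | hp)
    · obtain ⟨v, hvS, hvU, hvmax⟩ := exists_upper_vertex_max S₁ ⟨p, hp⟩
        (hinj.mono Set.subset_union_left) α
      have h1 := hbelow₁ v hvU
      have h2 := hvmax p hp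
      simp only [BelowLine] at *
      linarith
    · obtain ⟨v, hvS, hvU, hvmax⟩ := exists_upper_vertex_max S₂ ⟨p, hp⟩
        (hinj.mono Set.subset_union_right) α
      have h1 := hbelow₂ v hvU
      have h2 := hvmax p hp
      simp only [BelowLine] at *
      linarith
  refine ⟨hb, ?_⟩
  intro v hv hvU
  obtain ⟨_, α'', β'', hon, hbel⟩ := hvU
  have hm₁S : m₁ ∈ (S₁ : Set (ℝ × ℝ)) := hm₁.1.1
  have hm₂S : m₂ ∈ (S₂ : Set (ℝ × ℝ)) := hm₂.1.1
  have h1 : m₁.2 ≤ α'' * m₁.1 + β'' := hbel m₁ (Or.inl hm₁S)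
  have h2 : m₂.2 ≤ α'' * m₂.1 + β'' := hbel m₂ (Or.inr hm₂S)
  -- x-coordinates: m₁.1 < v.1 < m₂.1
  have hx : m₁.1 < v.1 ∧ v.1 < m₂.1 ∧ BelowLine α β v := by
    rcases hv with ⟨hvU₁, hxl⟩ | ⟨hvU₂, hxr⟩
    · have hvS : v ∈ (S₁ : Set (ℝ × ℝ)) := hvU₁.1.1
      exact ⟨hxl, lt_trans (hS₁ v hvS) (hS₂ m₂ hm₂S), hb v (Or.inl hvS)⟩
    · have hvS : v ∈ (S₂ : Set (ℝ × ℝ)) := hvU₂.1.1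
      exact ⟨lt_trans (hS₁ m₁ hm₁S) (hS₂ v hvS), hxr, hb v (Or.inr hvS)⟩
  obtain ⟨hx1, hx2, hvb⟩ := hx
  by_contra hnot
  have hvstr : v.2 < α * v.1 + β := lt_of_le_of_ne hvb hnot
  -- replace second coordinates using the line equations
  have h1' : α * m₁.1 + β ≤ α'' * m₁.1 + β'' := by rw [OnLine] at hl₁; linarith
  have h2' : α * m₂.1 + β ≤ α'' * m₂.1 + β'' := by rw [OnLine] at hl₂; linarith
  have hstr : α'' * v.1 + β'' < α * v.1 + β := by rw [OnLine] at hon; linarith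
  nlinarith [mul_le_mul_of_nonneg_left h1' (by linarith : (0:ℝ) ≤ m₂.1 - v.1),
    mul_le_mul_of_nonneg_left h2' (by linarith : (0:ℝ) ≤ v.1 - m₁.1),
    mul_lt_mul_of_pos_left hstr (by linarith : (0:ℝ) < m₂.1 - m₁.1)]
end
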